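/- arXiv:1508.02032 — 3 statements merged into one kernel-verified Lean document; each statement's English description precedes it below -/
import Mathlib

section
/- Let G be a topological group and let (π, H_π) and (τ, H_τ) be strongly continuous unitary representations of G on complex Hilbert spaces. Let V be a dense G-invariant linear subspace of H_π and let T : V → H_τ be a linear operator whose graph is closed in H_π × H_τ and which is G-equivariant, i.e. T(π(g)v) = τ(g)(T v) for all g ∈ G and v ∈ V. Then there exists a surjective linear isometry Φ from the orthogonal complement (ker T)^⊥ of the kernel of T onto the closure of the range of T which is G-equivariant: Φ(π(g)x) = τ(g)(Φ x) for all g ∈ G and all x ∈ (ker T)^⊥. (Mackey's Schur Lemma.) -/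
/-!
The graph `Γ` of `T` is a closed subspace of the Hilbert sum `Hπ ⊕ Hτ`, invariant under `π ⊕ τ`.
If `p₁, p₂` are its coordinate projections, the bounded operator `W = p₂ p₁*` (formally
`T (1 + T*T)⁻¹`) intertwines `π` and `τ`. It has the same kernel as `T` because `p₁*` is injective
(`V` is dense), and its range is dense in that of `T` because `p₁` is injective. The phase of the
polar decomposition of `W`, `√(W*W) x ↦ W x`, is an isometry from the closure of the range of
`√(W*W)`, which is `(ker W)ᗮ`, onto the closure of the range of `W`; it is equivariant because
`√(W*W)` commutes with every `π g`.
-/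

/-- A strongly continuous unitary representation of a topological group `G` on a
complex Hilbert space `H`. -/
structure UnitaryRep (G : Type*) [Group G] [TopologicalSpace G]
    (H : Type*) [NormedAddCommGroup H] [InnerProductSpace ℂ H] where
  ρ : G → (H →L[ℂ] H)
  map_one : ρ 1 = ContinuousLinearMap.id ℂ H
  map_mul : ∀ g₁ g₂ : G, ρ (g₁ * g₂) = (ρ g₁).comp (ρ g₂)
  inner_map : ∀ (g : G) (x y : H), (inner ℂ (ρ g x) (ρ g y) : ℂ) = inner ℂ x y
  strong_continuous : ∀ x : H, Continuous fun g : G => ρ g x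

namespace LinearMap

variable {𝕜 E F₁ F₂ : Type*} [NormedField 𝕜] [AddCommGroup E] [Module 𝕜 E]
  [NormedAddCommGroup F₁] [NormedSpace 𝕜 F₁] [NormedAddCommGroup F₂] [NormedSpace 𝕜 F₂]

def toClosureRange (f : E →ₗ[𝕜] F₁) : E →ₗ[𝕜] (range f).topologicalClosure :=
  Submodule.inclusion (range f).le_topologicalClosure ∘ₗ f.rangeRestrict

@[simp]
lemma coe_toClosureRange_apply (f : E →ₗ[𝕜] F₁) (x : E) : (f.toClosureRange x : F₁) = f x := rfl

lemma denseRange_toClosureRange (f : E →ₗ[𝕜] F₁) : DenseRange f.toClosureRange :=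
  ((denseRange_inclusion_iff (range f).le_topologicalClosure).2
    (Submodule.topologicalClosure_coe _).subset).comp
    f.surjective_rangeRestrict.denseRange (continuous_inclusion _)

variable [CompleteSpace F₁] [CompleteSpace F₂]

noncomputable def closureRangeEquivOfNormEq (S : E →ₗ[𝕜] F₁) (W : E →ₗ[𝕜] F₂)
    (h : ∀ x, ‖S x‖ = ‖W x‖) :
    (range S).topologicalClosure ≃ₗᵢ[𝕜] (range W).topologicalClosure :=
  (LinearEquiv.refl 𝕜 E).extendOfIsometry S.toClosureRange W.toClosureRange
    S.denseRange_toClosureRange W.denseRange_toClosureRange fun x => (h x).symm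

@[simp]
lemma closureRangeEquivOfNormEq_apply (S : E →ₗ[𝕜] F₁) (W : E →ₗ[𝕜] F₂)
    (h : ∀ x, ‖S x‖ = ‖W x‖) (x : E) :
    closureRangeEquivOfNormEq S W h (S.toClosureRange x) = W.toClosureRange x :=
  LinearEquiv.extendOfIsometry_eq _ _ _ _ _ _ x

variable {S : E →ₗ[𝕜] F₁} {W : E →ₗ[𝕜] F₂} {a : E →ₗ[𝕜] E} {u : F₁ →L[𝕜] F₁} {v : F₂ →L[𝕜] F₂}

omit [CompleteSpace F₁] [CompleteSpace F₂] in
lemma mem_topologicalClosure_range_of_intertwine (hS : ∀ x, S (a x) = u (S x)) {y : F₁}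
    (hy : y ∈ (range S).topologicalClosure) : u y ∈ (range S).topologicalClosure := by
  rw [← SetLike.mem_coe, Submodule.topologicalClosure_coe] at hy ⊢
  refine map_mem_closure u.continuous hy ?_
  rintro - ⟨x, rfl⟩
  exact ⟨a x, hS x⟩

lemma closureRangeEquivOfNormEq_intertwine (h : ∀ x, ‖S x‖ = ‖W x‖)
    (hS : ∀ x, S (a x) = u (S x)) (hW : ∀ x, W (a x) = v (W x))
    (y : (range S).topologicalClosure) :
    (closureRangeEquivOfNormEq S W h
        ⟨u y, mem_topologicalClosure_range_of_intertwine hS y.2⟩ : F₂) =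
      v (closureRangeEquivOfNormEq S W h y) := by
  refine S.denseRange_toClosureRange.induction_on y (isClosed_eq ?_ ?_) fun x => ?_
  · fun_prop
  · fun_prop
  · have hux : (⟨u (S x), mem_topologicalClosure_range_of_intertwine hS (S.toClosureRange x).2⟩ :
        (range S).topologicalClosure) = S.toClosureRange (a x) := Subtype.ext (hS x).symm
    simp only [coe_toClosureRange_apply, hux, closureRangeEquivOfNormEq_apply, hW]

end LinearMap

open ContinuousLinearMap InnerProductSpace

section Hilbert

variable {K H : Type*} [NormedAddCommGroup K] [InnerProductSpace ℂ K]
  [NormedAddCommGroup H] [InnerProductSpace ℂ H]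

section Complete

variable [CompleteSpace K] [CompleteSpace H]

lemma ContinuousLinearMap.injective_adjoint_of_denseRange {A : K →L[ℂ] H} (h : DenseRange A) :
    Function.Injective (adjoint A) :=
  (injective_iff_map_eq_zero _).2 fun x hx =>
    h.eq_zero_of_inner_right ℂ fun y => by rw [← adjoint_inner_right, hx, inner_zero_right]

lemma ContinuousLinearMap.denseRange_adjoint_of_injective {A : K →L[ℂ] H}
    (h : Function.Injective A) : DenseRange (adjoint A) := by
  rw [DenseRange, ← coe_coe, ← LinearMap.coe_range, Submodule.dense_iff_topologicalClosure_eq_top,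
    ← orthogonal_ker, LinearMap.ker_eq_bot.2 h, Submodule.bot_orthogonal_eq_top]

lemma norm_sqrt_adjoint_comp_self_apply (W : K →L[ℂ] H) (x : K) :
    ‖CFC.sqrt (adjoint W ∘L W) x‖ = ‖W x‖ := by
  set S := CFC.sqrt (adjoint W ∘L W)
  have hS : adjoint S = S := (CFC.sqrt_nonneg _).isSelfAdjoint.adjoint_eq
  have hSS : S ∘L S = adjoint W ∘L W :=
    CFC.sqrt_mul_sqrt_self _ ((nonneg_iff_isPositive _).2 W.isPositive_adjoint_comp_self)
  have hinner : ⟪S x, S x⟫_ℂ = ⟪W x, W x⟫_ℂ := by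
    rw [← adjoint_inner_right S, hS, ← comp_apply, hSS, comp_apply, adjoint_inner_right]
  rw [norm_eq_sqrt_re_inner (𝕜 := ℂ), hinner, ← norm_eq_sqrt_re_inner]

lemma topologicalClosure_range_sqrt_adjoint_comp_self (W : K →L[ℂ] H) :
    (CFC.sqrt (adjoint W ∘L W)).range.topologicalClosure = W.kerᗮ := by
  set S := CFC.sqrt (adjoint W ∘L W)
  have hker : S.ker = W.ker := by
    ext x
    rw [LinearMap.mem_ker, LinearMap.mem_ker, coe_coe, coe_coe, ← norm_eq_zero,
      norm_sqrt_adjoint_comp_self_apply, norm_eq_zero]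
  rw [← hker, orthogonal_ker, (CFC.sqrt_nonneg _).isSelfAdjoint.adjoint_eq]

lemma commute_sqrt_adjoint_comp_self {W : K →L[ℂ] H} {u : K →L[ℂ] K} {v : H →L[ℂ] H}
    (h : W ∘L u = v ∘L W) (h' : W ∘L adjoint u = adjoint v ∘L W) :
    Commute (CFC.sqrt (adjoint W ∘L W)) u := by
  refine Commute.cfcₙ_nnreal ?_ NNReal.sqrt
  have h'' : u ∘L adjoint W = adjoint W ∘L v := by simpa [adjoint_comp] using congrArg adjoint h'
  change (adjoint W ∘L W) ∘L u = u ∘L (adjoint W ∘L W)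
  rw [comp_assoc, h, ← comp_assoc, ← h'', comp_assoc]

end Complete

namespace Submodule

variable (Γ : Submodule ℂ (WithLp 2 (K × H)))

def graphFst : Γ →L[ℂ] K := WithLp.fstL 2 ℂ K H ∘L Γ.subtypeL

def graphSnd : Γ →L[ℂ] H := WithLp.sndL 2 ℂ K H ∘L Γ.subtypeL

variable {Γ} in
lemma inner_eq_graphFst_add_graphSnd (a b : Γ) :
    ⟪a, b⟫_ℂ = ⟪Γ.graphFst a, Γ.graphFst b⟫_ℂ + ⟪Γ.graphSnd a, Γ.graphSnd b⟫_ℂ :=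
  WithLp.prod_inner_apply _ _

variable [CompleteSpace K] [CompleteSpace Γ]

noncomputable def graphTransform : K →L[ℂ] H := Γ.graphSnd ∘L adjoint Γ.graphFst

lemma adjoint_graphFst_graphFst {w : Γ} (hw : Γ.graphSnd w = 0) :
    adjoint Γ.graphFst (Γ.graphFst w) = w :=
  ext_inner_right ℂ fun b => by
    rw [adjoint_inner_left, inner_eq_graphFst_add_graphSnd w b, hw, inner_zero_left, add_zero]

lemma ker_graphTransform (h : Function.Injective (adjoint Γ.graphFst)) :
    Γ.graphTransform.ker = Γ.graphSnd.ker.map (Γ.graphFst : Γ →ₗ[ℂ] K) := by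
  ext x
  constructor
  · intro hx
    have hw : Γ.graphSnd (adjoint Γ.graphFst x) = 0 := hx
    exact ⟨adjoint Γ.graphFst x, hw, h (adjoint_graphFst_graphFst Γ hw)⟩
  · rintro ⟨w, hw, rfl⟩
    change Γ.graphSnd (adjoint Γ.graphFst (Γ.graphFst w)) = 0
    rw [adjoint_graphFst_graphFst Γ hw]
    exact hw

lemma topologicalClosure_range_graphTransform (h : Function.Injective Γ.graphFst) :
    Γ.graphTransform.range.topologicalClosure = Γ.graphSnd.range.topologicalClosure := by
  refine le_antisymm (topologicalClosure_mono ?_)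
    (topologicalClosure_minimal _ ?_ (isClosed_topologicalClosure _))
  · rintro - ⟨x, rfl⟩
    exact ⟨_, rfl⟩
  · rintro - ⟨w, rfl⟩
    rw [← SetLike.mem_coe, topologicalClosure_coe]
    refine map_mem_closure Γ.graphSnd.continuous (denseRange_adjoint_of_injective h w) ?_
    rintro - ⟨x, rfl⟩
    exact ⟨x, rfl⟩

lemma graphTransform_comp [CompleteSpace H] {u : K →L[ℂ] K} {v : H →L[ℂ] H}
    (h : ∀ p ∈ Γ, WithLp.toLp 2 (u p.fst, v p.snd) ∈ Γ)
    (h' : ∀ p ∈ Γ, WithLp.toLp 2 (adjoint u p.fst, adjoint v p.snd) ∈ Γ) :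
    Γ.graphTransform ∘L u = v ∘L Γ.graphTransform := by
  ext x
  set a := adjoint Γ.graphFst x
  let a' : Γ := ⟨WithLp.toLp 2 (u (Γ.graphFst a), v (Γ.graphSnd a)), h a a.2⟩
  suffices adjoint Γ.graphFst (u x) = a' from congrArg Γ.graphSnd this
  refine ext_inner_right ℂ fun b => ?_
  let b' : Γ := ⟨WithLp.toLp 2 (adjoint u (Γ.graphFst b), adjoint v (Γ.graphSnd b)), h' b b.2⟩
  calc ⟪adjoint Γ.graphFst (u x), b⟫_ℂ = ⟪x, Γ.graphFst b'⟫_ℂ := by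
        rw [adjoint_inner_left, ← adjoint_inner_right]; rfl
    _ = ⟪Γ.graphFst a, adjoint u (Γ.graphFst b)⟫_ℂ +
          ⟪Γ.graphSnd a, adjoint v (Γ.graphSnd b)⟫_ℂ := by
        rw [← adjoint_inner_left, inner_eq_graphFst_add_graphSnd]; rfl
    _ = ⟪a', b⟫_ℂ := by
        rw [adjoint_inner_right, adjoint_inner_right, inner_eq_graphFst_add_graphSnd]; rfl

end Submodule

namespace LinearPMap

lemma coe_graph_mk {R E F : Type*} [Ring R] [AddCommGroup E] [Module R E]
    [AddCommGroup F] [Module R F] (V : Submodule R E) (T : V →ₗ[R] F) :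
    ((⟨V, T⟩ : E →ₗ.[R] F).graph : Set (E × F)) = {p | ∃ hv : p.1 ∈ V, T ⟨p.1, hv⟩ = p.2} := by
  ext ⟨x, z⟩
  rw [SetLike.mem_coe, mem_graph_iff]
  constructor
  · rintro ⟨⟨y, hy⟩, rfl, rfl⟩
    exact ⟨hy, rfl⟩
  · rintro ⟨hx, hTx⟩
    exact ⟨⟨x, hx⟩, rfl, hTx⟩

variable (f : K →ₗ.[ℂ] H)

def graphL2 : Submodule ℂ (WithLp 2 (K × H)) :=
  f.graph.comap (WithLp.linearEquiv 2 ℂ (K × H)).toLinearMap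

variable {f} in
lemma mem_graphL2 {p : WithLp 2 (K × H)} :
    p ∈ f.graphL2 ↔ ∃ y : f.domain, (y : K) = p.fst ∧ f y = p.snd :=
  f.mem_graph_iff

lemma isClosed_graphL2 (hf : f.IsClosed) :
    _root_.IsClosed (f.graphL2 : Set (WithLp 2 (K × H))) :=
  hf.preimage (WithLp.prod_continuous_ofLp 2 K H)

lemma graphFst_injective : Function.Injective f.graphL2.graphFst := by
  refine (injective_iff_map_eq_zero _).2 fun p hp => Subtype.ext ?_
  have hsnd : p.1.snd = 0 := f.mem_graph_snd_inj p.2 f.graph.zero_mem hp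
  exact WithLp.ofLp_injective 2 (Prod.ext hp hsnd)

lemma range_graphFst : Set.range f.graphL2.graphFst = f.domain := by
  ext x
  constructor
  · rintro ⟨p, rfl⟩
    obtain ⟨y, hy, -⟩ := mem_graphL2.1 p.2
    have hy' : (y : K) = f.graphL2.graphFst p := hy
    exact hy' ▸ y.2
  · intro hx
    exact ⟨⟨WithLp.toLp 2 (x, f ⟨x, hx⟩), mem_graphL2.2 ⟨⟨x, hx⟩, rfl, rfl⟩⟩, rfl⟩

lemma range_graphSnd : f.graphL2.graphSnd.range = LinearMap.range f.toFun := by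
  ext z
  constructor
  · rintro ⟨p, rfl⟩
    obtain ⟨y, -, hy⟩ := mem_graphL2.1 p.2
    exact ⟨y, hy⟩
  · rintro ⟨y, rfl⟩
    exact ⟨⟨WithLp.toLp 2 (y, f y), mem_graphL2.2 ⟨y, rfl, rfl⟩⟩, rfl⟩

lemma map_graphFst_ker_graphSnd :
    f.graphL2.graphSnd.ker.map (f.graphL2.graphFst : f.graphL2 →ₗ[ℂ] K) =
      (LinearMap.ker f.toFun).map f.domain.subtype := by
  ext x
  constructor
  · rintro ⟨p, hp, rfl⟩
    obtain ⟨y, hy, hfy⟩ := mem_graphL2.1 p.2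
    exact ⟨y, hfy.trans hp, hy⟩
  · rintro ⟨y, hy, rfl⟩
    exact ⟨⟨WithLp.toLp 2 (y, 0), mem_graphL2.2 ⟨y, rfl, hy⟩⟩, rfl, rfl⟩

lemma toLp_mem_graphL2 {u : K → K} {v : H → H} (hu : ∀ y ∈ f.domain, u y ∈ f.domain)
    (huv : ∀ y : f.domain, f ⟨u y, hu y y.2⟩ = v (f y)) {p : WithLp 2 (K × H)}
    (hp : p ∈ f.graphL2) :
    WithLp.toLp 2 (u p.fst, v p.snd) ∈ f.graphL2 := by
  obtain ⟨y, hy, hfy⟩ := mem_graphL2.1 hp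
  exact mem_graphL2.2 ⟨⟨u y, hu y y.2⟩, congrArg u hy, (huv y).trans (congrArg v hfy)⟩

end LinearPMap

end Hilbert

namespace UnitaryRep

variable {G : Type*} [Group G] [TopologicalSpace G]
  {K H : Type*} [NormedAddCommGroup K] [InnerProductSpace ℂ K]
  [NormedAddCommGroup H] [InnerProductSpace ℂ H]

lemma ρ_apply_ρ_inv_apply (π : UnitaryRep G K) (g : G) (x : K) : π.ρ g (π.ρ g⁻¹ x) = x := by
  rw [← comp_apply, ← π.map_mul, mul_inv_cancel, π.map_one, id_apply]

lemma adjoint_ρ [CompleteSpace K] (π : UnitaryRep G K) (g : G) : adjoint (π.ρ g) = π.ρ g⁻¹ :=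
  ext fun x => ext_inner_right ℂ fun y => by
    rw [adjoint_inner_left, ← π.inner_map g (π.ρ g⁻¹ x) y, ρ_apply_ρ_inv_apply]

lemma graphTransform_graphL2_comp_ρ [CompleteSpace K] [CompleteSpace H]
    (π : UnitaryRep G K) (τ : UnitaryRep G H) (f : K →ₗ.[ℂ] H) [CompleteSpace f.graphL2]
    (hinv : ∀ g, ∀ y ∈ f.domain, π.ρ g y ∈ f.domain)
    (hequiv : ∀ g (y : f.domain), f ⟨π.ρ g y, hinv g y y.2⟩ = τ.ρ g (f y)) (g : G) :
    f.graphL2.graphTransform ∘L π.ρ g = τ.ρ g ∘L f.graphL2.graphTransform := by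
  refine f.graphL2.graphTransform_comp (fun p hp => f.toLp_mem_graphL2 _ (hequiv g) hp)
    fun p hp => ?_
  rw [π.adjoint_ρ, τ.adjoint_ρ]
  exact f.toLp_mem_graphL2 _ (hequiv g⁻¹) hp

end UnitaryRep

/-- **Mackey's Schur Lemma.** If `T` is a closed, densely defined, `G`-equivariant
operator from a unitary representation `(π, Hπ)` to a unitary representation `(τ, Hτ)`,
then there is a surjective `G`-equivariant linear isometry from `(ker T)ᗮ` onto the
closure of the range of `T`. -/
theorem mackey_schur_lemma
    {G : Type*} [Group G] [TopologicalSpace G]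
    {Hπ : Type*} [NormedAddCommGroup Hπ] [InnerProductSpace ℂ Hπ] [CompleteSpace Hπ]
    {Hτ : Type*} [NormedAddCommGroup Hτ] [InnerProductSpace ℂ Hτ] [CompleteSpace Hτ]
    (π : UnitaryRep G Hπ) (τ : UnitaryRep G Hτ)
    (V : Submodule ℂ Hπ) (hVdense : Dense (V : Set Hπ))
    (hVinv : ∀ (g : G), ∀ v ∈ V, π.ρ g v ∈ V)
    (T : V →ₗ[ℂ] Hτ)
    (hclosed : IsClosed {p : Hπ × Hτ | ∃ hv : p.1 ∈ V, T ⟨p.1, hv⟩ = p.2})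
    (hequiv : ∀ (g : G) (v : V) (hgv : π.ρ g (v : Hπ) ∈ V),
      T ⟨π.ρ g (v : Hπ), hgv⟩ = τ.ρ g (T v)) :
    ∃ Φ : (((LinearMap.ker T).map V.subtype)ᗮ : Submodule ℂ Hπ) →ₗᵢ[ℂ]
        ((LinearMap.range T).topologicalClosure : Submodule ℂ Hτ),
      Function.Surjective Φ ∧
      ∀ (g : G) (x : Hπ) (hx : x ∈ ((LinearMap.ker T).map V.subtype)ᗮ)
        (hgx : π.ρ g x ∈ ((LinearMap.ker T).map V.subtype)ᗮ),
        (Φ ⟨π.ρ g x, hgx⟩ : Hτ) = τ.ρ g (Φ ⟨x, hx⟩ : Hτ) := by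
  let f : Hπ →ₗ.[ℂ] Hτ := ⟨V, T⟩
  have hf : f.IsClosed := by rw [LinearPMap.IsClosed, LinearPMap.coe_graph_mk]; exact hclosed
  have := (f.isClosed_graphL2 hf).completeSpace_coe
  set W := f.graphL2.graphTransform
  have hW : ∀ g, W ∘L π.ρ g = τ.ρ g ∘L W :=
    π.graphTransform_graphL2_comp_ρ τ f hVinv fun g y => hequiv g y _
  set S := CFC.sqrt (adjoint W ∘L W)
  have hS : ∀ g, S ∘L π.ρ g = π.ρ g ∘L S := fun g =>
    commute_sqrt_adjoint_comp_self (hW g) (by rw [π.adjoint_ρ, τ.adjoint_ρ, hW])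
  have hdomain : S.range.topologicalClosure = ((LinearMap.ker T).map V.subtype)ᗮ := by
    rw [topologicalClosure_range_sqrt_adjoint_comp_self, f.graphL2.ker_graphTransform
      (injective_adjoint_of_denseRange (by rwa [DenseRange, f.range_graphFst])),
      f.map_graphFst_ker_graphSnd]
  have hrange : W.range.topologicalClosure = (LinearMap.range T).topologicalClosure := by
    rw [f.graphL2.topologicalClosure_range_graphTransform f.graphFst_injective, f.range_graphSnd]
  rw [← hdomain, ← hrange]
  have hnorm := norm_sqrt_adjoint_comp_self_apply W
  let Φ := LinearMap.closureRangeEquivOfNormEq _ _ hnorm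
  exact ⟨Φ.toLinearIsometry, Φ.surjective, fun g x hx _ =>
    LinearMap.closureRangeEquivOfNormEq_intertwine hnorm (DFunLike.congr_fun (hS g))
      (DFunLike.congr_fun (hW g)) ⟨x, hx⟩⟩
end

section
/- Let p ≥ 0 and q ≥ 1 be natural numbers. Let L be a finite list of GGP symbols that is a GGP pattern, and suppose the multiplicities of the four symbols in L are: exactly q symbols (first source, +), exactly p symbols (first source, −), exactly q − 1 symbols (second source, +), and exactly p symbols (second source, −). Then L is nonempty and its first entry is either (first source, +) or (second source, −); in the notation of signs, the pattern must start with + or with ⊖. (This is the Lemma that the interlacing sign pattern of Harish-Chandra parameters (χ, z) of U(q,p) and (η, t) of U(q−1,p) satisfying the GGP interlacing relation must begin with + for (χ₁, +1) or ⊖ for (η₁, −1).) -/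
/-!
Call `+` and `⊖` the symbols of class `true` and `−`, `⊕` those of class `false`
(the class of `(s, ε)` is `s xor ε`). A pair is GGP-allowed exactly when the classes of its
entries differ, so the classes along a GGP pattern alternate. Here class `true` occurs
`q + p` times and class `false` only `p + q - 1` times, and an alternating Boolean list in which
one value occurs more often than the other must start with that value.
-/

/-- A GGP symbol: a pair `(s, ε)` where `s : Bool` records the source sequence
(`false` = first source, `true` = second source) and `ε : Bool` records the sign
(`true` = `+`, `false` = `−`). -/
abbrev GGPSymbol := Bool × Bool

/-- An ordered pair of GGP symbols is allowed iff they have the same source exactly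
when they have different signs. The allowed adjacent pairs are exactly
`(⊕ +), (+ ⊕), (− ⊖), (⊖ −), (+ −), (− +), (⊕ ⊖), (⊖ ⊕)`. -/
def GGPAllowed (a b : GGPSymbol) : Prop := a.1 = b.1 ↔ a.2 ≠ b.2

/-- A list of GGP symbols is a GGP pattern if every adjacent pair is allowed. -/
def IsGGPPattern (L : List GGPSymbol) : Prop := List.Chain' GGPAllowed L

theorem List.IsChain.head?_eq_of_count_not_lt {l : List Bool} (hl : l.IsChain (· ≠ ·))
    {b : Bool} (hlt : l.count (!b) < l.count b) : l.head? = some b := by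
  rcases l with - | ⟨x, l⟩
  · simp at hlt
  · have hx := hl.count_not_cons
    cases x <;> cases b <;> grind

def ggpClass (x : GGPSymbol) : Bool := xor x.1 x.2

theorem ggpAllowed_iff_ggpClass_ne {a b : GGPSymbol} :
    GGPAllowed a b ↔ ggpClass a ≠ ggpClass b := by
  unfold GGPAllowed ggpClass
  revert a b
  decide

theorem ggpClass_eq_true_iff {x : GGPSymbol} :
    ggpClass x = true ↔ x = (false, true) ∨ x = (true, false) := by
  revert x
  decide

theorem count_map_ggpClass (L : List GGPSymbol) (b : Bool) :
    (L.map ggpClass).count b = L.count (false, b) + L.count (true, !b) := by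
  induction L with
  | nil => rfl
  | cons x L ih =>
    simp only [List.map_cons, List.count_cons, ih]
    obtain ⟨_ | _, _ | _⟩ := x <;> cases b <;> simp [ggpClass] <;> omega

theorem IsGGPPattern.isChain_map_ggpClass {L : List GGPSymbol} (hL : IsGGPPattern L) :
    (L.map ggpClass).IsChain (· ≠ ·) :=
  List.isChain_map_of_isChain ggpClass (fun _ _ => ggpAllowed_iff_ggpClass_ne.mp) hL

/-- A GGP pattern with `q` symbols `(first source, +)`, `p` symbols `(first source, −)`,
`q − 1` symbols `(second source, +)` and `p` symbols `(second source, −)` (with `q ≥ 1`)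
is nonempty and starts with `(first source, +)` or `(second source, −)`, i.e. with `+`
or with `⊖`. -/
theorem ggp_pattern_head (p q : ℕ) (hq : 1 ≤ q) (L : List GGPSymbol)
    (hL : IsGGPPattern L)
    (hcount₁ : L.count ((false, true) : GGPSymbol) = q)
    (hcount₂ : L.count ((false, false) : GGPSymbol) = p)
    (hcount₃ : L.count ((true, true) : GGPSymbol) = q - 1)
    (hcount₄ : L.count ((true, false) : GGPSymbol) = p) :
    L ≠ [] ∧
    (L.head? = some ((false, true) : GGPSymbol) ∨
     L.head? = some ((true, false) : GGPSymbol)) := by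
  have hlt : (L.map ggpClass).count (!true) < (L.map ggpClass).count true := by
    simp only [count_map_ggpClass, Bool.not_true, Bool.not_false]
    omega
  have hhead := hL.isChain_map_ggpClass.head?_eq_of_count_not_lt hlt
  rw [List.head?_map, Option.map_eq_some_iff] at hhead
  obtain ⟨x, hx, hclass⟩ := hhead
  refine ⟨fun hnil => by simp [hnil] at hx, ?_⟩
  rcases ggpClass_eq_true_iff.mp hclass with rfl | rfl
  exacts [.inl hx, .inr hx]
end

section
/- Let q ≥ s ≥ 1 be natural numbers and let a_1 ≥ a_2 ≥ … ≥ a_q ≥ 1 and b_1 ≥ b_2 ≥ … ≥ b_s ≥ 1 be real numbers. Then ∏_{i=1}^{q} ∏_{j=1}^{s} (a_i² + b_j² + a_i⁻² + b_j⁻²)⁻¹ ≤ ∏_{i=1}^{s} (a_i + a_i⁻¹)^(2i − 2s − 2 + 1/2) · ∏_{j=1}^{s} (b_j + b_j⁻¹)^(2j − 2q − 1/2). (This is the key product estimate, in the case q ≥ s ≥ 1, used to prove that the restricted matrix coefficients of the oscillator representation ω(n,n;r,s) are integrable against L² functions on Ũ(p,q).) -/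
/-!
With `A = a + a⁻¹ ≥ 2` and `B = b + b⁻¹ ≥ 2`, the factor `(a² + b² + a⁻² + b⁻²)⁻¹` equals
`(A² + B² - 4)⁻¹`, and weighted AM-GM gives `A ^ α * B ^ β ≤ A² + B² - 4` whenever `α, β ≥ 0`
and `α + β = 2`. So each factor `(i, j)` is bounded by `A_i ^ (-w) * B_j ^ (w - 2)` for any
`w ∈ [0, 2]`. Taking `w = 2, 3/2, 0` according as `i < j`, `i = j`, `i > j`, the row sums of `w`
and the column sums of `2 - w` are exactly the exponents of the estimate.
-/

open Finset Real

lemma two_le_add_inv_self {a : ℝ} (ha : 0 < a) : 2 ≤ a + a⁻¹ := by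
  have : a * a⁻¹ = 1 := mul_inv_cancel₀ ha.ne'
  nlinarith [sq_nonneg (a - 1), inv_pos.2 ha]

lemma sq_add_inv_sq_eq {a : ℝ} (ha : a ≠ 0) : a ^ 2 + (a ^ 2)⁻¹ = (a + a⁻¹) ^ 2 - 2 := by
  field_simp
  ring

lemma rpow_mul_rpow_le_sq_add_sq_sub_four {A B α β : ℝ} (hA : 2 ≤ A) (hB : 2 ≤ B)
    (hα : 0 ≤ α) (hβ : 0 ≤ β) (hαβ : α + β = 2) :
    A ^ α * B ^ β ≤ A ^ 2 + B ^ 2 - 4 := by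
  have hsq {x γ : ℝ} (hx : 0 ≤ x) : x ^ γ = (x ^ 2) ^ (γ / 2) := by
    rw [← rpow_two, ← rpow_mul hx]
    ring_nf
  calc A ^ α * B ^ β = (A ^ 2) ^ (α / 2) * (B ^ 2) ^ (β / 2) := by
        rw [hsq (by linarith), hsq (by linarith : 0 ≤ B)]
    _ ≤ α / 2 * A ^ 2 + β / 2 * B ^ 2 :=
        geom_mean_le_arith_mean2_weighted (by positivity) (by positivity) (by positivity)
          (by positivity) (by linarith)
    _ ≤ A ^ 2 + B ^ 2 - 4 := by
        nlinarith [mul_nonneg hα (by nlinarith : 0 ≤ B ^ 2 - 4),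
          mul_nonneg hβ (by nlinarith : 0 ≤ A ^ 2 - 4)]

lemma inv_sq_add_sq_add_inv_sq_add_inv_sq_le {a b α β : ℝ} (ha : 0 < a) (hb : 0 < b)
    (hα : 0 ≤ α) (hβ : 0 ≤ β) (hαβ : α + β = 2) :
    (a ^ 2 + b ^ 2 + (a ^ 2)⁻¹ + (b ^ 2)⁻¹)⁻¹ ≤ (a + a⁻¹) ^ (-α) * (b + b⁻¹) ^ (-β) := by
  have hA := two_le_add_inv_self ha
  have hB := two_le_add_inv_self hb
  rw [rpow_neg (by linarith), rpow_neg (by linarith), ← mul_inv]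
  refine inv_anti₀ (by positivity) ?_
  have := rpow_mul_rpow_le_sq_add_sq_sub_four hA hB hα hβ hαβ
  linarith [sq_add_inv_sq_eq ha.ne', sq_add_inv_sq_eq hb.ne']

lemma prod_prod_rpow_mul_rpow {ι κ : Type*} [Fintype ι] [Fintype κ] {f : ι → ℝ} {g : κ → ℝ}
    (hf : ∀ i, 0 < f i) (hg : ∀ j, 0 < g j) (x y : ι → κ → ℝ) :
    ∏ i, ∏ j, f i ^ x i j * g j ^ y i j = (∏ i, f i ^ ∑ j, x i j) * ∏ j, g j ^ ∑ i, y i j := by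
  simp only [prod_mul_distrib, rpow_sum_of_pos (hf _), rpow_sum_of_pos (hg _)]
  rw [prod_comm (f := fun i j => g j ^ y i j)]

lemma Fin.prod_univ_eq_prod_castLE {M : Type*} [CommMonoid M] {m n : ℕ} (h : n ≤ m)
    (f : Fin m → M) (hf : ∀ i : Fin m, n ≤ (i : ℕ) → f i = 1) :
    ∏ i, f i = ∏ i : Fin n, f (Fin.castLE h i) := by
  refine (Fintype.prod_of_injective _ (Fin.castLE_injective h) _ _ (fun i hi => hf i ?_)
    fun _ => rfl).symm
  by_contra! hlt
  exact hi ⟨⟨i, hlt⟩, rfl⟩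

noncomputable def pairWeight (i j : ℕ) : ℝ := if i < j then 2 else if i = j then 3 / 2 else 0

lemma pairWeight_nonneg (i j : ℕ) : 0 ≤ pairWeight i j := by
  unfold pairWeight; split_ifs <;> norm_num

lemma pairWeight_le_two (i j : ℕ) : pairWeight i j ≤ 2 := by
  unfold pairWeight; split_ifs <;> norm_num

lemma sum_range_pairWeight_left (i n : ℕ) :
    ∑ j ∈ range n, pairWeight i j = if n ≤ i then (0 : ℝ) else 2 * n - 2 * i - 1 / 2 := by
  induction n with
  | zero => simp
  | succ n ih =>
    rw [sum_range_succ, ih]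
    unfold pairWeight
    split_ifs <;> first | omega | (subst_vars; push_cast; ring)

lemma sum_range_pairWeight_right (j n : ℕ) :
    ∑ i ∈ range n, pairWeight i j = if n ≤ j then (2 * n : ℝ) else 2 * j + 3 / 2 := by
  induction n with
  | zero => simp
  | succ n ih =>
    rw [sum_range_succ, ih]
    unfold pairWeight
    split_ifs <;> first | omega | (subst_vars; push_cast; ring)

theorem oscillator_product_estimate_general (q s : ℕ) (hsq : s ≤ q)
    (a : Fin q → ℝ) (b : Fin s → ℝ)
    (ha_one : ∀ i, 1 ≤ a i)
    (hb_one : ∀ j, 1 ≤ b j) :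
    (∏ i : Fin q, ∏ j : Fin s,
        ((a i) ^ 2 + (b j) ^ 2 + ((a i) ^ 2)⁻¹ + ((b j) ^ 2)⁻¹)⁻¹)
      ≤ (∏ i : Fin s, (a (Fin.castLE hsq i) + (a (Fin.castLE hsq i))⁻¹)
            ^ (2 * ((i : ℕ) : ℝ) + 2 - 2 * (s : ℝ) - 2 + 1 / 2))
        * (∏ j : Fin s, (b j + (b j)⁻¹)
            ^ (2 * ((j : ℕ) : ℝ) + 2 - 2 * (q : ℝ) - 1 / 2)) := by
  have ha i : 0 < a i := one_pos.trans_le (ha_one i)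
  have hb j : 0 < b j := one_pos.trans_le (hb_one j)
  have hA i : 0 < a i + (a i)⁻¹ := by have := ha i; positivity
  have hB j : 0 < b j + (b j)⁻¹ := by have := hb j; positivity
  calc _ ≤ ∏ i : Fin q, ∏ j : Fin s,
          (a i + (a i)⁻¹) ^ (-pairWeight i j) * (b j + (b j)⁻¹) ^ (-(2 - pairWeight i j)) := by
        refine prod_le_prod (fun i _ => prod_nonneg fun j _ => ?_) fun i _ => prod_le_prod
          (fun j _ => ?_) fun j _ => inv_sq_add_sq_add_inv_sq_add_inv_sq_le (ha i) (hb j)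
            (pairWeight_nonneg i j) (sub_nonneg.2 (pairWeight_le_two i j)) (by ring)
        all_goals have := ha i; have := hb j; positivity
    _ = (∏ i : Fin q, (a i + (a i)⁻¹) ^ ∑ j : Fin s, -pairWeight i j)
          * ∏ j : Fin s, (b j + (b j)⁻¹) ^ ∑ i : Fin q, -(2 - pairWeight i j) :=
        prod_prod_rpow_mul_rpow hA hB _ _
    _ = _ := by
      rw [Fin.prod_univ_eq_prod_castLE hsq _ fun i hi => ?_]
      · congr 1 <;> refine prod_congr rfl fun i _ => congr_arg _ ?_
        · rw [sum_neg_distrib, Fin.sum_univ_eq_sum_range (pairWeight _), sum_range_pairWeight_left,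
            Fin.val_castLE, if_neg i.isLt.not_ge]
          ring
        · rw [sum_neg_distrib, sum_sub_distrib, Fin.sum_univ_eq_sum_range (fun k => pairWeight k i),
            sum_range_pairWeight_right, if_neg (i.isLt.trans_le hsq).not_ge, Fin.sum_const,
            nsmul_eq_mul]
          ring
      · rw [sum_neg_distrib, Fin.sum_univ_eq_sum_range (pairWeight _), sum_range_pairWeight_left,
          if_pos hi, neg_zero, rpow_zero]

/-- The key product estimate (case `q ≥ s ≥ 1`) used in the matrix coefficient
estimates for the oscillator representation `ω(n,n;r,s)`: for
`a₁ ≥ a₂ ≥ … ≥ a_q ≥ 1` and `b₁ ≥ b₂ ≥ … ≥ b_s ≥ 1`,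
`∏_{i=1}^{q} ∏_{j=1}^{s} (a_i² + b_j² + a_i⁻² + b_j⁻²)⁻¹
  ≤ ∏_{i=1}^{s} (a_i + a_i⁻¹)^(2i − 2s − 2 + 1/2) · ∏_{j=1}^{s} (b_j + b_j⁻¹)^(2j − 2q − 1/2)`.
(Indices in the exponents are 1-based; `Fin` indices are 0-based, whence the `+ 2`.) -/
theorem oscillator_product_estimate (q s : ℕ) (hs : 1 ≤ s) (hsq : s ≤ q)
    (a : Fin q → ℝ) (b : Fin s → ℝ)
    (ha_anti : Antitone a) (ha_one : ∀ i, 1 ≤ a i)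
    (hb_anti : Antitone b) (hb_one : ∀ j, 1 ≤ b j) :
    (∏ i : Fin q, ∏ j : Fin s,
        ((a i) ^ 2 + (b j) ^ 2 + ((a i) ^ 2)⁻¹ + ((b j) ^ 2)⁻¹)⁻¹)
      ≤ (∏ i : Fin s, (a (Fin.castLE hsq i) + (a (Fin.castLE hsq i))⁻¹)
            ^ (2 * ((i : ℕ) : ℝ) + 2 - 2 * (s : ℝ) - 2 + 1 / 2))
        * (∏ j : Fin s, (b j + (b j)⁻¹)
            ^ (2 * ((j : ℕ) : ℝ) + 2 - 2 * (q : ℝ) - 1 / 2)) :=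
  oscillator_product_estimate_general q s hsq a b ha_one hb_one
end
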